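/- arXiv:2201.00482 — 6 statements merged into one kernel-verified Lean document; each statement's English description precedes it below -/
import Mathlib

section
/- Let M be a ℤ-lattice in V with dual lattice M^∨ and discriminant d = [M^∨ : M]. Let N ⊆ M be a primitive ℤ-submodule such that the restriction of b to the ℚ-span of N is nondegenerate. Then the indices [N^∨ : N] and [(N^⊥)^∨ : N^⊥] are finite and [N^∨ : N] ≤ d · [(N^⊥)^∨ : N^⊥]. -/
/-!
Restriction of `b` maps `M^∨` onto `N^∨`: as `N` is primitive, `M/N` is free, so a functional on
`N` extends to `M`, and nondegeneracy of `b` represents it by a vector, which lies in `M^∨`.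
Hence `N^∨/N ≅ M^∨/J` with `J` the preimage of the image of `N`, and
`[M^∨ : J] ≤ [M^∨ : M] · [M : M ∩ J]`. Restriction to `N^⊥` embeds `M/(M ∩ J)` into
`(N^⊥)^∨/N^⊥`: if `m ∈ M` agrees on `N^⊥` with some `y ∈ N^⊥`, then `m - y` is orthogonal to
`N^⊥`, whose `ℚ`-span is `(ℚN)^⊥`, so `m - y ∈ M ∩ ℚN = N`. The cokernels are finite because `b`
is nondegenerate on `ℚN` and on `(ℚN)^⊥`, so a multiple of every functional is represented.
-/

open Submodule

theorem card_le_index_mul_card {A Q Q' : Type*} [AddGroup A] [AddGroup Q] [AddGroup Q'] [Finite Q']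
    (S : AddSubgroup A) [S.FiniteIndex] (Φ : A →+ Q) (hΦ : Function.Surjective Φ) (Θ : S →+ Q')
    (hΘ : Θ.ker ≤ Φ.ker.addSubgroupOf S) : Nat.card Q ≤ S.index * Nat.card Q' := by
  have : Θ.ker.FiniteIndex := ⟨by rw [AddSubgroup.index_ker]; exact Nat.card_pos.ne'⟩
  have : (Φ.ker.addSubgroupOf S).FiniteIndex := AddSubgroup.finiteIndex_of_le hΘ
  have hrel : Φ.ker.relIndex S ≤ Nat.card Q' := calc
    Φ.ker.relIndex S ≤ Θ.ker.index := AddSubgroup.index_antitone hΘ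
    _ = Nat.card Θ.range := AddSubgroup.index_ker Θ
    _ ≤ Nat.card Q' := Finite.card_subtype_le _
  have hdvd : Φ.ker.index ∣ Φ.ker.relIndex S * S.index := by
    rw [← AddSubgroup.inf_relIndex_right, AddSubgroup.relIndex_mul_index inf_le_right]
    exact AddSubgroup.index_dvd_of_le inf_le_left
  calc Nat.card Q = Φ.ker.index := by
        rw [AddSubgroup.index_ker, AddMonoidHom.range_eq_top.mpr hΦ, AddSubgroup.card_top]
    _ ≤ Φ.ker.relIndex S * S.index :=
        Nat.le_of_dvd (Nat.pos_of_ne_zero (mul_ne_zero AddSubgroup.FiniteIndex.index_ne_zero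
          AddSubgroup.FiniteIndex.index_ne_zero)) hdvd
    _ ≤ S.index * Nat.card Q' := by rw [mul_comm]; exact Nat.mul_le_mul_left _ hrel

section RationalSpan

variable {V : Type*} [AddCommGroup V] [Module ℚ V]

theorem Submodule.exists_int_smul_mem_of_mem_span_rat (B : Submodule ℤ V) {x : V}
    (hx : x ∈ span ℚ (B : Set V)) : ∃ k : ℤ, k ≠ 0 ∧ k • x ∈ B := by
  induction hx using span_induction with
  | mem y hy => exact ⟨1, one_ne_zero, by simpa using hy⟩
  | zero => exact ⟨1, one_ne_zero, by simp⟩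
  | add y z _ _ hy hz =>
      obtain ⟨k, hk, hky⟩ := hy
      obtain ⟨l, hl, hlz⟩ := hz
      refine ⟨l * k, mul_ne_zero hl hk, ?_⟩
      rw [smul_add, mul_smul, mul_comm, mul_smul]
      exact add_mem (B.smul_mem l hky) (B.smul_mem k hlz)
  | smul q y _ hy =>
      obtain ⟨k, hk, hky⟩ := hy
      refine ⟨q.den * k, mul_ne_zero (by exact_mod_cast q.den_nz) hk, ?_⟩
      have key : ((q.den * k : ℤ) : ℚ) • q • y = (q.num : ℚ) • (k : ℚ) • y := by
        rw [smul_smul, smul_smul]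
        congr 1
        push_cast
        linear_combination k * Rat.mul_den_eq_num q
      rw [Int.cast_smul_eq_zsmul, Int.cast_smul_eq_zsmul, Int.cast_smul_eq_zsmul] at key
      exact key ▸ B.smul_mem q.num hky

theorem exists_ratLinearMap_extend (L : Submodule ℤ V) (f : L →ₗ[ℤ] ℚ) :
    ∃ g : V →ₗ[ℚ] ℚ, ∀ x : L, g x = f x := by
  obtain ⟨g, hg⟩ := (Module.Baer.of_divisible ℚ).extension_property L.subtype L.injective_subtype f
  exact ⟨g.toAddMonoidHom.toRatLinearMap, fun x => LinearMap.congr_fun hg x⟩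

noncomputable def intPairing (b : LinearMap.BilinForm ℚ V) (A C : Submodule ℤ V)
    (h : ∀ a ∈ A, ∀ c ∈ C, ∃ k : ℤ, b a c = k) : A →ₗ[ℤ] C →ₗ[ℤ] ℤ :=
  LinearMap.codRestrict₂ ((b.restrictScalars₁₂ ℤ ℤ).compl₁₂ A.subtype C.subtype)
    (Algebra.linearMap ℤ ℚ) Int.cast_injective
    (fun a c => by obtain ⟨k, hk⟩ := h a a.2 c c.2; exact ⟨k, hk.symm⟩)

@[simp]
theorem intPairing_apply (b : LinearMap.BilinForm ℚ V) (A C : Submodule ℤ V)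
    (h : ∀ a ∈ A, ∀ c ∈ C, ∃ k : ℤ, b a c = k) (a : A) (c : C) :
    (intPairing b A C h a c : ℚ) = b a c :=
  LinearMap.codRestrict₂_apply (R := ℤ) _ (Algebra.linearMap ℤ ℚ) _ _ a c

end RationalSpan

namespace LinearMap.BilinForm

variable {V : Type*} [AddCommGroup V] [Module ℚ V] {b : LinearMap.BilinForm ℚ V}

theorem IsSymm.restrict_nondegenerate (hb : b.IsSymm) {W : Submodule ℚ V}
    (hW : ∀ v ∈ W, (∀ w ∈ W, b v w = 0) → v = 0) : (b.restrict W).Nondegenerate := by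
  refine (hb.restrict W).isRefl.nondegenerate_iff_separatingLeft.mpr fun v hv => ?_
  exact Subtype.ext (hW v v.2 fun w hw => hv ⟨w, hw⟩)

variable [FiniteDimensional ℚ V]

theorem exists_mem_eq_of_restrict_nondegenerate {W : Submodule ℚ V}
    (hW : (b.restrict W).Nondegenerate) (g : V →ₗ[ℚ] ℚ) : ∃ v ∈ W, ∀ w ∈ W, b v w = g w :=
  ⟨_, (((b.restrict W).toDual hW).symm (g.domRestrict W)).2,
    fun w hw => apply_toDual_symm_apply (hB := hW) _ ⟨w, hw⟩⟩

theorem restrict_orthogonal_nondegenerate (hb : b.IsSymm) (hbnd : b.Nondegenerate)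
    {W : Submodule ℚ V} (hW : (b.restrict W).Nondegenerate) :
    (b.restrict (b.orthogonal W)).Nondegenerate := by
  rw [restrict_nondegenerate_iff_isCompl_orthogonal hb.isRefl,
    orthogonal_orthogonal hbnd hb.isRefl]
  exact (isCompl_orthogonal_of_restrict_nondegenerate hb.isRefl hW).symm

end LinearMap.BilinForm

theorem Submodule.exists_extend_of_projective_quotient {R M X : Type*} [Ring R] [AddCommGroup M]
    [Module R M] [AddCommGroup X] [Module R X] (p : Submodule R M)
    [Module.Projective R (M ⧸ p)] (g : p →ₗ[R] X) : ∃ G : M →ₗ[R] X, G ∘ₗ p.subtype = g := by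
  obtain ⟨σ, hσ⟩ := p.mkQ.exists_rightInverse_of_surjective p.range_mkQ
  have hσ' : ∀ y, Submodule.Quotient.mk (σ y) = y := LinearMap.congr_fun hσ
  let π : M →ₗ[R] M := LinearMap.id - σ ∘ₗ p.mkQ
  have hπ : ∀ x, π x ∈ p := fun x => by
    rw [← p.ker_mkQ, LinearMap.mem_ker]
    simp [π, hσ']
  refine ⟨g ∘ₗ π.codRestrict p hπ, LinearMap.ext fun x => congrArg g (Subtype.ext ?_)⟩
  simp [π, (Submodule.Quotient.mk_eq_zero p).mpr x.2]

theorem Submodule.exists_extend_of_primitive {R V X : Type*} [CommRing R] [IsDomain R]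
    [IsPrincipalIdealRing R] [AddCommGroup V] [Module R V] [AddCommGroup X] [Module R X]
    {M N : Submodule R V} (hM : M.FG) (hNM : N ≤ M)
    (hprim : ∀ m ∈ M, ∀ k : R, k ≠ 0 → k • m ∈ N → m ∈ N)
    (g : N →ₗ[R] X) : ∃ G : M →ₗ[R] X, G ∘ₗ inclusion hNM = g := by
  set P := N.comap M.subtype
  have : Module.Finite R M := Module.Finite.iff_fg.mpr hM
  have : Module.IsTorsionFree R (M ⧸ P) := .of_smul_eq_zero fun k x hkx => by
    obtain ⟨m, rfl⟩ := P.mkQ_surjective x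
    rw [← map_smul, mkQ_apply, Quotient.mk_eq_zero] at hkx
    rw [mkQ_apply, Quotient.mk_eq_zero, or_iff_not_imp_left]
    exact fun hk => hprim m m.2 k hk hkx
  have : Module.Free R (M ⧸ P) := Module.free_of_finite_type_torsion_free'
  obtain ⟨G, hG⟩ := P.exists_extend_of_projective_quotient (g ∘ₗ comapSubtypeEquivOfLe hNM)
  exact ⟨G, LinearMap.ext fun n => LinearMap.congr_fun hG ⟨inclusion hNM n, n.2⟩⟩

section Lattice

variable {V : Type*} [AddCommGroup V] [Module ℚ V] {b : LinearMap.BilinForm ℚ V}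

theorem intPairing_mem_range_iff {A L : Submodule ℤ V} (h : ∀ a ∈ A, ∀ c ∈ L, ∃ k : ℤ, b a c = k)
    (χ : L →ₗ[ℤ] L →ₗ[ℤ] ℤ) (hχ : ∀ n x : L, (χ n x : ℚ) = b x n) (a : A) :
    intPairing b A L h a ∈ LinearMap.range χ ↔ ∃ n ∈ L, ∀ x ∈ L, b a x = b x n := by
  constructor
  · rintro ⟨n, hn⟩
    refine ⟨n, n.2, fun x hx => ?_⟩
    rw [← intPairing_apply b A L h a ⟨x, hx⟩, ← hn, hχ]
  · rintro ⟨n, hn, hnx⟩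
    refine ⟨⟨n, hn⟩, LinearMap.ext fun x => Int.cast_injective (α := ℚ) ?_⟩
    rw [hχ, intPairing_apply, hnx x x.2]

theorem Submodule.finite_quotient_comap_of_le_span {A B : Submodule ℤ V} [Module.Finite ℤ A]
    (hAB : (A : Set V) ⊆ span ℚ (B : Set V)) : Finite (A ⧸ B.comap A.subtype) := by
  refine Module.finite_of_fg_torsion _ fun x => ?_
  obtain ⟨a, rfl⟩ := (B.comap A.subtype).mkQ_surjective x
  obtain ⟨k, hk, hka⟩ := B.exists_int_smul_mem_of_mem_span_rat (hAB a.2)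
  refine ⟨⟨k, mem_nonZeroDivisors_of_ne_zero hk⟩, ?_⟩
  rw [Submonoid.mk_smul, ← map_zsmul, mkQ_apply, Quotient.mk_eq_zero]
  exact hka

theorem finite_discriminantGroup (hb : b.SeparatingLeft) {M : Submodule ℤ V} (hM : M.FG)
    (hMspan : span ℚ (M : Set V) = ⊤) {Mdual : Submodule ℤ V}
    (hMdual : ∀ x : V, x ∈ Mdual ↔ ∀ m ∈ M, ∃ k : ℤ, b x m = k) :
    Finite (Mdual ⧸ M.comap Mdual.subtype) := by
  set rM := intPairing b Mdual M fun x hx => (hMdual x).1 hx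
  have hinj : Function.Injective rM := fun u v huv => by
    have hvanish : span ℚ (M : Set V) ≤ LinearMap.ker (b (u - v)) := span_le.mpr fun m hm => by
      have := congr((($huv ⟨m, hm⟩ : ℤ) : ℚ))
      rw [intPairing_apply, intPairing_apply] at this
      simp [this]
    exact Subtype.ext (sub_eq_zero.mp (hb _ fun w => hvanish (hMspan ▸ mem_top)))
  have : Module.Finite ℤ M := Module.Finite.iff_fg.mpr hM
  have : Module.Finite ℤ Mdual := Module.Finite.of_injective rM hinj
  exact finite_quotient_comap_of_le_span fun x _ => hMspan ▸ mem_top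

theorem span_rat_perp_eq_orthogonal (hb : b.IsSymm) {M N Nperp : Submodule ℤ V}
    (hMspan : span ℚ (M : Set V) = ⊤)
    (hNperp : ∀ x : V, x ∈ Nperp ↔ x ∈ M ∧ ∀ n ∈ N, b x n = 0) :
    span ℚ (Nperp : Set V) = b.orthogonal (span ℚ (N : Set V)) := by
  apply le_antisymm
  · refine span_le.mpr fun x hx n hn => ?_
    rw [hb.eq]
    exact span_le (p := LinearMap.ker (b x)).mpr (fun n hn => ((hNperp x).1 hx).2 n hn) hn
  · intro u hu
    obtain ⟨k, hk, hkM⟩ := M.exists_int_smul_mem_of_mem_span_rat (hMspan ▸ mem_top : u ∈ _)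
    have hkNperp : k • u ∈ Nperp := (hNperp _).2 ⟨hkM, fun n hn => by
      rw [← Int.cast_smul_eq_zsmul ℚ, map_smul, LinearMap.smul_apply, hb.eq]
      exact smul_eq_zero_of_right _ (hu n (subset_span hn))⟩
    have hu' : u = (k : ℚ)⁻¹ • (k • u) := by
      rw [← Int.cast_smul_eq_zsmul ℚ, smul_smul, inv_mul_cancel₀ (by exact_mod_cast hk), one_smul]
    rw [hu']
    exact smul_mem _ _ (subset_span hkNperp)

variable [FiniteDimensional ℚ V]

theorem finite_quotient_range_of_restrict_nondegenerate (hb : b.IsSymm) {L : Submodule ℤ V}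
    (hL : L.FG) (hLnd : (b.restrict (span ℚ (L : Set V))).Nondegenerate)
    (χ : L →ₗ[ℤ] L →ₗ[ℤ] ℤ) (hχ : ∀ n x : L, (χ n x : ℚ) = b x n) :
    Finite ((L →ₗ[ℤ] ℤ) ⧸ LinearMap.range χ) := by
  have : IsAddTorsionFree V := .of_module_rat V
  have : Module.Finite ℤ L := Module.Finite.iff_fg.mpr hL
  have : Module.Free ℤ L := Module.free_of_finite_type_torsion_free'
  refine Module.finite_of_fg_torsion _ fun fq => ?_
  obtain ⟨f, rfl⟩ := (LinearMap.range χ).mkQ_surjective fq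
  obtain ⟨g, hg⟩ := exists_ratLinearMap_extend L (Algebra.linearMap ℤ ℚ ∘ₗ f)
  obtain ⟨v, hvL, hv⟩ := LinearMap.BilinForm.exists_mem_eq_of_restrict_nondegenerate hLnd g
  obtain ⟨k, hk, hkv⟩ := L.exists_int_smul_mem_of_mem_span_rat hvL
  refine ⟨⟨k, mem_nonZeroDivisors_of_ne_zero hk⟩, ?_⟩
  rw [Submonoid.mk_smul, ← map_zsmul, mkQ_apply, Quotient.mk_eq_zero]
  refine ⟨⟨k • v, hkv⟩, LinearMap.ext fun x => Int.cast_injective (α := ℚ) ?_⟩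
  rw [hχ]
  show b x (k • v) = _
  rw [← Int.cast_smul_eq_zsmul ℚ, map_smul, hb.eq, hv x (subset_span x.2), hg]
  simp

theorem intPairing_surjective_of_primitive (hbnd : b.Nondegenerate) {M : Submodule ℤ V}
    (hM : M.FG) {Mdual : Submodule ℤ V} (hMdual : ∀ x : V, x ∈ Mdual ↔ ∀ m ∈ M, ∃ k : ℤ, b x m = k)
    {N : Submodule ℤ V} (hNM : N ≤ M) (hprim : ∀ m ∈ M, ∀ k : ℤ, k ≠ 0 → k • m ∈ N → m ∈ N)
    (h : ∀ a ∈ Mdual, ∀ c ∈ N, ∃ k : ℤ, b a c = k) :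
    Function.Surjective (intPairing b Mdual N h) := by
  intro g
  obtain ⟨G, hG⟩ := exists_extend_of_primitive hM hNM hprim g
  obtain ⟨f, hf⟩ := exists_ratLinearMap_extend M (Algebra.linearMap ℤ ℚ ∘ₗ G)
  set v := (b.toDual hbnd).symm f
  have hv : ∀ m : M, b v m = G m := fun m =>
    (LinearMap.BilinForm.apply_toDual_symm_apply f m).trans (hf m)
  refine ⟨⟨v, (hMdual v).2 fun m hm => ⟨G ⟨m, hm⟩, hv ⟨m, hm⟩⟩⟩,
    LinearMap.ext fun n => Int.cast_injective (α := ℚ) ?_⟩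
  rw [intPairing_apply, ← hG]
  exact hv (inclusion hNM n)

theorem mem_of_forall_perp_eq_zero (hb : b.IsSymm) (hbnd : b.Nondegenerate)
    {M N Nperp : Submodule ℤ V} (hMspan : span ℚ (M : Set V) = ⊤)
    (hprim : ∀ m ∈ M, ∀ k : ℤ, k ≠ 0 → k • m ∈ N → m ∈ N)
    (hNperp : ∀ x : V, x ∈ Nperp ↔ x ∈ M ∧ ∀ n ∈ N, b x n = 0)
    {z : V} (hzM : z ∈ M) (hz : ∀ y ∈ Nperp, b z y = 0) : z ∈ N := by
  have hzW : z ∈ span ℚ (N : Set V) := by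
    rw [← LinearMap.BilinForm.orthogonal_orthogonal hbnd hb.isRefl (span ℚ (N : Set V)),
      ← span_rat_perp_eq_orthogonal hb hMspan hNperp]
    intro u hu
    show b u z = 0
    rw [hb.eq]
    exact span_le (p := LinearMap.ker (b z)).mpr hz hu
  obtain ⟨k, hk, hkN⟩ := N.exists_int_smul_mem_of_mem_span_rat hzW
  exact hprim z hzM k hk hkN

theorem exists_mem_eq_of_exists_perp (hb : b.IsSymm) (hbnd : b.Nondegenerate)
    {M N Nperp : Submodule ℤ V} (hMspan : span ℚ (M : Set V) = ⊤)
    (hprim : ∀ m ∈ M, ∀ k : ℤ, k ≠ 0 → k • m ∈ N → m ∈ N)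
    (hNperp : ∀ x : V, x ∈ Nperp ↔ x ∈ M ∧ ∀ n ∈ N, b x n = 0)
    {m : V} (hm : m ∈ M) (h : ∃ y ∈ Nperp, ∀ x ∈ Nperp, b m x = b x y) :
    ∃ n ∈ N, ∀ x ∈ N, b m x = b x n := by
  obtain ⟨y, hy, hmy⟩ := h
  have hyN : ∀ x ∈ N, b y x = 0 := ((hNperp y).1 hy).2
  refine ⟨m - y, mem_of_forall_perp_eq_zero hb hbnd hMspan hprim hNperp
    (sub_mem hm ((hNperp y).1 hy).1) fun x hx => ?_, fun x hx => ?_⟩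
  · rw [map_sub, LinearMap.sub_apply, hmy x hx, hb.eq, sub_self]
  · rw [map_sub, hb.eq x y, hyN x hx, sub_zero, hb.eq]

end Lattice

theorem stmt0_general
    {V : Type*} [AddCommGroup V] [Module ℚ V] [FiniteDimensional ℚ V]
    (b : LinearMap.BilinForm ℚ V)
    (hsymm : ∀ x y : V, b x y = b y x)
    (hnd : ∀ v : V, (∀ w : V, b v w = 0) → v = 0)
    -- M is a ℤ-lattice in V
    (M : Submodule ℤ V) (hMfg : M.FG)
    (hMspan : Submodule.span ℚ (M : Set V) = ⊤)
    -- the dual lattice M^∨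
    (Mdual : Submodule ℤ V)
    (hMdual : ∀ x : V, x ∈ Mdual ↔ ∀ m ∈ M, ∃ k : ℤ, b x m = (k : ℚ))
    -- N ⊆ M primitive, with nondegenerate restriction of b to its ℚ-span
    (N : Submodule ℤ V) (hNM : N ≤ M)
    (hprim : ∀ m ∈ M, ∀ k : ℤ, k ≠ 0 → k • m ∈ N → m ∈ N)
    (hNnd : ∀ v ∈ Submodule.span ℚ (N : Set V),
      (∀ w ∈ Submodule.span ℚ (N : Set V), b v w = 0) → v = 0)
    -- N^⊥, the orthogonal complement of N inside M
    (Nperp : Submodule ℤ V)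
    (hNperpdef : ∀ x : V, x ∈ Nperp ↔ x ∈ M ∧ ∀ n ∈ N, b x n = 0)
    -- the natural map N → N^∨ = Hom_ℤ(N, ℤ), n ↦ (x ↦ b(x,n))
    (φ : N →ₗ[ℤ] (N →ₗ[ℤ] ℤ))
    (hφ : ∀ n x : N, ((φ n x : ℤ) : ℚ) = b (x : V) (n : V))
    -- the natural map N^⊥ → (N^⊥)^∨ = Hom_ℤ(N^⊥, ℤ)
    (ψ : Nperp →ₗ[ℤ] (Nperp →ₗ[ℤ] ℤ))
    (hψ : ∀ n x : Nperp, ((ψ n x : ℤ) : ℚ) = b (x : V) (n : V)) :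
    Finite ((N →ₗ[ℤ] ℤ) ⧸ LinearMap.range φ) ∧
    Finite ((Nperp →ₗ[ℤ] ℤ) ⧸ LinearMap.range ψ) ∧
    Nat.card ((N →ₗ[ℤ] ℤ) ⧸ LinearMap.range φ) ≤
      Nat.card (Mdual ⧸ (M.comap Mdual.subtype)) *
        Nat.card ((Nperp →ₗ[ℤ] ℤ) ⧸ LinearMap.range ψ) := by
  have hb : b.IsSymm := ⟨hsymm⟩
  have hbnd : b.Nondegenerate := hb.isRefl.nondegenerate_iff_separatingLeft.mpr hnd
  have hNperpM : Nperp ≤ M := fun x hx => ((hNperpdef x).1 hx).1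
  have hN : (b.restrict (span ℚ (N : Set V))).Nondegenerate := hb.restrict_nondegenerate hNnd
  have hNperp : (b.restrict (span ℚ (Nperp : Set V))).Nondegenerate := by
    rw [span_rat_perp_eq_orthogonal hb hMspan hNperpdef]
    exact LinearMap.BilinForm.restrict_orthogonal_nondegenerate hb hbnd hN
  have hφfin := finite_quotient_range_of_restrict_nondegenerate hb (hMfg.of_le hNM) hN φ hφ
  have hψfin := finite_quotient_range_of_restrict_nondegenerate hb (hMfg.of_le hNperpM) hNperp ψ hψ
  have : Finite (Mdual ⧸ M.comap Mdual.subtype) := finite_discriminantGroup hnd hMfg hMspan hMdual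
  have : (M.comap Mdual.subtype).toAddSubgroup.FiniteIndex :=
    ⟨(Nat.card_pos (α := Mdual ⧸ M.comap Mdual.subtype)).ne'⟩
  refine ⟨hφfin, hψfin, ?_⟩
  have hMdualN : ∀ a ∈ Mdual, ∀ c ∈ N, ∃ k : ℤ, b a c = k :=
    fun a ha c hc => (hMdual a).1 ha c (hNM hc)
  have hMdualNperp : ∀ a ∈ Mdual, ∀ c ∈ Nperp, ∃ k : ℤ, b a c = k :=
    fun a ha c hc => (hMdual a).1 ha c (hNperpM hc)
  refine card_le_index_mul_card (M.comap Mdual.subtype).toAddSubgroup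
    ((LinearMap.range φ).mkQ ∘ₗ intPairing b Mdual N hMdualN).toAddMonoidHom
    ((mkQ_surjective _).comp (intPairing_surjective_of_primitive hbnd hMfg hMdual hNM hprim _))
    ((LinearMap.range ψ).mkQ ∘ₗ intPairing b Mdual Nperp hMdualNperp ∘ₗ
      (M.comap Mdual.subtype).subtype).toAddMonoidHom fun m hm => ?_
  simp only [AddMonoidHom.mem_ker, AddSubgroup.mem_addSubgroupOf, LinearMap.toAddMonoidHom_coe,
    LinearMap.comp_apply, mkQ_apply, Quotient.mk_eq_zero, intPairing_mem_range_iff _ φ hφ,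
    intPairing_mem_range_iff _ ψ hψ] at hm ⊢
  exact exists_mem_eq_of_exists_perp hb hbnd hMspan hprim hNperpdef m.2 hm

/-- Let `V` be a finite-dimensional `ℚ`-vector space with a nondegenerate
symmetric bilinear form `b`, `M` a `ℤ`-lattice in `V` with dual lattice `Mdual` and
discriminant `d = [M^∨ : M]`.  Let `N ⊆ M` be a primitive `ℤ`-submodule such that the
restriction of `b` to the `ℚ`-span of `N` is nondegenerate.  Then the indices
`[N^∨ : N]` and `[(N^⊥)^∨ : N^⊥]` are finite and
`[N^∨ : N] ≤ d * [(N^⊥)^∨ : N^⊥]`. -/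
theorem stmt0
    {V : Type*} [AddCommGroup V] [Module ℚ V] [FiniteDimensional ℚ V]
    (b : LinearMap.BilinForm ℚ V)
    (hsymm : ∀ x y : V, b x y = b y x)
    (hnd : ∀ v : V, (∀ w : V, b v w = 0) → v = 0)
    -- M is a ℤ-lattice in V
    (M : Submodule ℤ V) (hMfg : M.FG)
    (hMspan : Submodule.span ℚ (M : Set V) = ⊤)
    (hMint : ∀ x ∈ M, ∀ y ∈ M, ∃ k : ℤ, b x y = (k : ℚ))
    -- the dual lattice M^∨
    (Mdual : Submodule ℤ V)
    (hMdual : ∀ x : V, x ∈ Mdual ↔ ∀ m ∈ M, ∃ k : ℤ, b x m = (k : ℚ))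
    -- N ⊆ M primitive, with nondegenerate restriction of b to its ℚ-span
    (N : Submodule ℤ V) (hNM : N ≤ M)
    (hprim : ∀ m ∈ M, ∀ k : ℤ, k ≠ 0 → k • m ∈ N → m ∈ N)
    (hNnd : ∀ v ∈ Submodule.span ℚ (N : Set V),
      (∀ w ∈ Submodule.span ℚ (N : Set V), b v w = 0) → v = 0)
    -- N^⊥, the orthogonal complement of N inside M
    (Nperp : Submodule ℤ V)
    (hNperpdef : ∀ x : V, x ∈ Nperp ↔ x ∈ M ∧ ∀ n ∈ N, b x n = 0)
    -- the natural map N → N^∨ = Hom_ℤ(N, ℤ), n ↦ (x ↦ b(x,n))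
    (φ : N →ₗ[ℤ] (N →ₗ[ℤ] ℤ))
    (hφ : ∀ n x : N, ((φ n x : ℤ) : ℚ) = b (x : V) (n : V))
    -- the natural map N^⊥ → (N^⊥)^∨ = Hom_ℤ(N^⊥, ℤ)
    (ψ : Nperp →ₗ[ℤ] (Nperp →ₗ[ℤ] ℤ))
    (hψ : ∀ n x : Nperp, ((ψ n x : ℤ) : ℚ) = b (x : V) (n : V)) :
    Finite ((N →ₗ[ℤ] ℤ) ⧸ LinearMap.range φ) ∧
    Finite ((Nperp →ₗ[ℤ] ℤ) ⧸ LinearMap.range ψ) ∧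
    Nat.card ((N →ₗ[ℤ] ℤ) ⧸ LinearMap.range φ) ≤
      Nat.card (Mdual ⧸ (M.comap Mdual.subtype)) *
        Nat.card ((Nperp →ₗ[ℤ] ℤ) ⧸ LinearMap.range ψ) :=
  stmt0_general b hsymm hnd M hMfg hMspan Mdual hMdual N hNM hprim hNnd Nperp hNperpdef φ hφ ψ hψ
end

section
/- Let M be a ℤ-lattice in V, and let N ⊆ M be a primitive ℤ-submodule such that the restriction of b to the ℚ-span of N is nondegenerate. Then the map sending m ∈ M to the homomorphism (y ↦ b(m,y)) ∈ Hom_ℤ(N^⊥, ℤ) induces an injective homomorphism of abelian groups M/(N + N^⊥) → (N^⊥)^∨/N^⊥ (the cokernel of the natural map N^⊥ → (N^⊥)^∨); consequently [M : N + N^⊥] ≤ [(N^⊥)^∨ : N^⊥]. -/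
/-!
Write `W = ℚN`. Since `b|W` is nondegenerate, `V = W ⊕ W^⊥`, and clearing denominators (with
`ℚM = V`) shows `ℚN^⊥ = W^⊥`, on which `b` is again nondegenerate. Hence an element of `M`
orthogonal to `N^⊥` has no `W^⊥`-component, so it lies in `W ∩ M`, which is `N` by primitivity:
the kernel of `M → (N^⊥)^∨/N^⊥` is `N + N^⊥`. Nondegeneracy on `ℚN^⊥` also makes
`N^⊥ → (N^⊥)^∨` injective, so its cokernel is finite (a full-rank sublattice), and the injection
bounds the cardinalities.
-/

open Submodule (span)

theorem Submodule.exists_int_smul_mem_of_mem_span_rat_s4 {V : Type*} [AddCommGroup V] [Module ℚ V]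
    {P : Submodule ℤ V} {v : V} (hv : v ∈ span ℚ (P : Set V)) :
    ∃ k : ℤ, k ≠ 0 ∧ k • v ∈ P := by
  obtain ⟨y, hy, z, rfl⟩ := (IsLocalization.mem_span_iff (nonZeroDivisors ℤ)).mp hv
  have hz : ((z : ℤ) : ℚ) * IsLocalization.mk' ℚ (1 : ℤ) z = 1 := by simp
  refine ⟨z, nonZeroDivisors.coe_ne_zero z, ?_⟩
  rwa [← Int.cast_smul_eq_zsmul ℚ, smul_smul, hz, one_smul, ← Submodule.span_eq P]

theorem finite_dual_quotient_range_of_injective {L : Type*} [AddCommGroup L] [Module.Free ℤ L]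
    [Module.Finite ℤ L] {ψ : L →ₗ[ℤ] (L →ₗ[ℤ] ℤ)} (hψ : Function.Injective ψ) :
    Finite ((L →ₗ[ℤ] ℤ) ⧸ LinearMap.range ψ) :=
  Submodule.finiteQuotientOfFreeOfRankEq _ <| by
    rw [LinearMap.finrank_range_of_inj hψ]
    exact (Module.Free.chooseBasis ℤ L).toDualEquiv.finrank_eq

namespace LinearMap.BilinForm

section Field

variable {K V : Type*} [Field K] [AddCommGroup V] [Module K V] {B : LinearMap.BilinForm K V}

theorem apply_eq_zero_of_mem_span {s : Set V} {x y : V} (hx : ∀ z ∈ s, B x z = 0)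
    (hy : y ∈ span K s) : B x y = 0 :=
  (Submodule.span_le (p := LinearMap.ker (B x))).mpr hx hy

theorem eq_zero_of_mem_span_of_forall_apply_eq_zero {s : Set V}
    (hs : (B.restrict (span K s)).Nondegenerate) {x : V} (hx : x ∈ span K s)
    (h : ∀ y ∈ s, B x y = 0) : x = 0 :=
  congrArg Subtype.val (hs.1 ⟨x, hx⟩ fun y ↦ apply_eq_zero_of_mem_span (B := B) h y.2)

theorem nondegenerate_restrict_orthogonal [FiniteDimensional K V] (hB : B.Nondegenerate)
    (hB₀ : B.IsRefl) {W : Submodule K V} (hW : (B.restrict W).Nondegenerate) :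
    (B.restrict (B.orthogonal W)).Nondegenerate := by
  rw [restrict_nondegenerate_iff_isCompl_orthogonal hB₀, orthogonal_orthogonal hB hB₀]
  exact (isCompl_orthogonal_of_restrict_nondegenerate hB₀ hW).symm

end Field

section Lattice

variable {V : Type*} [AddCommGroup V] [Module ℚ V] {b : LinearMap.BilinForm ℚ V}
  {M N L : Submodule ℤ V}

theorem span_rat_eq_orthogonal (hb : b.IsSymm) (hM : span ℚ (M : Set V) = ⊤)
    (hL : ∀ x, x ∈ L ↔ x ∈ M ∧ ∀ n ∈ N, b x n = 0) :
    span ℚ (L : Set V) = b.orthogonal (span ℚ (N : Set V)) := by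
  refine le_antisymm (Submodule.span_le.mpr fun x hx n hn ↦ ?_) fun p hp ↦ ?_
  · rw [hb.eq]
    exact apply_eq_zero_of_mem_span ((hL x).1 hx).2 hn
  · obtain ⟨k, hk, hkM⟩ := Submodule.exists_int_smul_mem_of_mem_span_rat_s4
      (hM ▸ Submodule.mem_top : p ∈ span ℚ (M : Set V))
    have hkL : k • p ∈ L := (hL _).2 ⟨hkM, fun n hn ↦ by
      rw [← Int.cast_smul_eq_zsmul ℚ, map_smul, smul_apply, hb.eq,
        hp n (Submodule.subset_span hn), smul_zero]⟩
    have hk : (k : ℚ) ≠ 0 := Int.cast_ne_zero.mpr hk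
    rw [← inv_smul_smul₀ hk p, Int.cast_smul_eq_zsmul]
    exact Submodule.smul_mem _ _ (Submodule.subset_span hkL)

theorem injective_of_restrict_span_rat_nondegenerate (hb : b.IsSymm)
    (hL : (b.restrict (span ℚ (L : Set V))).Nondegenerate) {ψ : L →ₗ[ℤ] (L →ₗ[ℤ] ℤ)}
    (hψ : ∀ n x : L, ((ψ n x : ℤ) : ℚ) = b x n) : Function.Injective ψ := by
  refine (injective_iff_map_eq_zero ψ).mpr fun n hn ↦ Subtype.ext ?_
  refine eq_zero_of_mem_span_of_forall_apply_eq_zero hL (Submodule.subset_span n.2)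
    fun y hy ↦ ?_
  rw [hb.eq, ← hψ n ⟨y, hy⟩, hn, LinearMap.zero_apply, Int.cast_zero]

variable [FiniteDimensional ℚ V]

theorem restrict_span_rat_nondegenerate (hb : b.IsSymm) (hnd : b.Nondegenerate)
    (hM : span ℚ (M : Set V) = ⊤) (hL : ∀ x, x ∈ L ↔ x ∈ M ∧ ∀ n ∈ N, b x n = 0)
    (hN : (b.restrict (span ℚ (N : Set V))).Nondegenerate) :
    (b.restrict (span ℚ (L : Set V))).Nondegenerate := by
  rw [span_rat_eq_orthogonal hb hM hL]
  exact nondegenerate_restrict_orthogonal hnd hb.isRefl hN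

theorem mem_of_forall_apply_eq_zero (hb : b.IsSymm) (hnd : b.Nondegenerate)
    (hM : span ℚ (M : Set V) = ⊤) (hL : ∀ x, x ∈ L ↔ x ∈ M ∧ ∀ n ∈ N, b x n = 0)
    (hN : (b.restrict (span ℚ (N : Set V))).Nondegenerate)
    (hprim : ∀ m ∈ M, ∀ k : ℤ, k ≠ 0 → k • m ∈ N → m ∈ N)
    {x : V} (hxM : x ∈ M) (hx : ∀ y ∈ L, b x y = 0) : x ∈ N := by
  have hsup := (isCompl_orthogonal_of_restrict_nondegenerate hb.isRefl hN).sup_eq_top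
  obtain ⟨w, hw, p, hp, rfl⟩ := Submodule.mem_sup.mp (hsup ▸ Submodule.mem_top : x ∈ _)
  rw [← span_rat_eq_orthogonal hb hM hL] at hp
  have hp0 : p = 0 := by
    refine eq_zero_of_mem_span_of_forall_apply_eq_zero
      (restrict_span_rat_nondegenerate hb hnd hM hL hN) hp fun y hy ↦ ?_
    have hyW : y ∈ b.orthogonal (span ℚ (N : Set V)) :=
      span_rat_eq_orthogonal hb hM hL ▸ Submodule.subset_span hy
    simpa [hyW w hw] using hx y hy
  rw [hp0, add_zero] at hxM ⊢
  obtain ⟨k, hk, hkN⟩ := Submodule.exists_int_smul_mem_of_mem_span_rat_s4 hw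
  exact hprim w hxM k hk hkN

theorem ker_mkQ_comp_eq (hb : b.IsSymm) (hnd : b.Nondegenerate)
    (hM : span ℚ (M : Set V) = ⊤) (hL : ∀ x, x ∈ L ↔ x ∈ M ∧ ∀ n ∈ N, b x n = 0)
    (hN : (b.restrict (span ℚ (N : Set V))).Nondegenerate)
    (hprim : ∀ m ∈ M, ∀ k : ℤ, k ≠ 0 → k • m ∈ N → m ∈ N)
    {ψ : L →ₗ[ℤ] (L →ₗ[ℤ] ℤ)} (hψ : ∀ n x : L, ((ψ n x : ℤ) : ℚ) = b x n)
    {ρ : M →ₗ[ℤ] (L →ₗ[ℤ] ℤ)} (hρ : ∀ (m : M) (y : L), ((ρ m y : ℤ) : ℚ) = b m y) :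
    LinearMap.ker ((LinearMap.range ψ).mkQ ∘ₗ ρ) = (N ⊔ L).comap M.subtype := by
  ext m
  simp only [LinearMap.mem_ker, LinearMap.comp_apply, Submodule.mkQ_apply,
    Submodule.Quotient.mk_eq_zero, LinearMap.mem_range, Submodule.mem_comap,
    Submodule.subtype_apply]
  constructor
  · rintro ⟨p, hp⟩
    have hmp : (m : V) - p ∈ N := by
      refine mem_of_forall_apply_eq_zero hb hnd hM hL hN hprim
        (sub_mem m.2 ((hL p).1 p.2).1) fun y hy ↦ ?_
      rw [map_sub, LinearMap.sub_apply, ← hρ m ⟨y, hy⟩, hb.eq _ y, ← hψ p ⟨y, hy⟩, hp,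
        sub_self]
    simpa using Submodule.add_mem_sup hmp p.2
  · intro hm
    obtain ⟨n, hn, p, hp, hnp⟩ := Submodule.mem_sup.mp hm
    refine ⟨⟨p, hp⟩, LinearMap.ext fun y ↦ Int.cast_injective (α := ℚ) ?_⟩
    have hyn : b n y = 0 := by rw [hb.eq]; exact ((hL y).1 y.2).2 n hn
    rw [hψ, hρ, ← hnp, map_add, LinearMap.add_apply, hyn, zero_add, hb.eq]

end Lattice

end LinearMap.BilinForm

open LinearMap.BilinForm

theorem stmt4_general
    {V : Type*} [AddCommGroup V] [Module ℚ V] [FiniteDimensional ℚ V]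
    (b : LinearMap.BilinForm ℚ V)
    (hsymm : ∀ x y : V, b x y = b y x)
    (hnd : ∀ v : V, (∀ w : V, b v w = 0) → v = 0)
    -- M is a ℤ-lattice in V
    (M : Submodule ℤ V) (hMfg : M.FG)
    (hMspan : Submodule.span ℚ (M : Set V) = ⊤)
    -- N ⊆ M primitive, with nondegenerate restriction of b to its ℚ-span
    (N : Submodule ℤ V)
    (hprim : ∀ m ∈ M, ∀ k : ℤ, k ≠ 0 → k • m ∈ N → m ∈ N)
    (hNnd : ∀ v ∈ Submodule.span ℚ (N : Set V),
      (∀ w ∈ Submodule.span ℚ (N : Set V), b v w = 0) → v = 0)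
    -- N^⊥, the orthogonal complement of N inside M
    (Nperp : Submodule ℤ V)
    (hNperpdef : ∀ x : V, x ∈ Nperp ↔ x ∈ M ∧ ∀ n ∈ N, b x n = 0)
    -- the natural map N^⊥ → (N^⊥)^∨ = Hom_ℤ(N^⊥, ℤ)
    (ψ : Nperp →ₗ[ℤ] (Nperp →ₗ[ℤ] ℤ))
    (hψ : ∀ n x : Nperp, ((ψ n x : ℤ) : ℚ) = b (x : V) (n : V))
    -- the map M → Hom_ℤ(N^⊥, ℤ), m ↦ (y ↦ b(m,y))
    (ρ : M →ₗ[ℤ] (Nperp →ₗ[ℤ] ℤ))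
    (hρ : ∀ (m : M) (y : Nperp), ((ρ m y : ℤ) : ℚ) = b (m : V) (y : V)) :
    (∃ g : (M ⧸ ((N ⊔ Nperp).comap M.subtype)) →ₗ[ℤ]
        ((Nperp →ₗ[ℤ] ℤ) ⧸ LinearMap.range ψ),
      Function.Injective g ∧
        ∀ m : M, g (Submodule.Quotient.mk m) = Submodule.Quotient.mk (ρ m)) ∧
    Nat.card (M ⧸ ((N ⊔ Nperp).comap M.subtype)) ≤
      Nat.card ((Nperp →ₗ[ℤ] ℤ) ⧸ LinearMap.range ψ) := by
  have hb : b.IsSymm := ⟨hsymm⟩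
  have hbnd : b.Nondegenerate := hb.isRefl.nondegenerate_iff_separatingLeft.mpr hnd
  have hbN : (b.restrict (span ℚ (N : Set V))).Nondegenerate :=
    (hb.isRefl.domRestrict _).nondegenerate_iff_separatingLeft.mpr
      fun v hv ↦ Subtype.ext (hNnd v v.2 fun w hw ↦ hv ⟨w, hw⟩)
  have hker := ker_mkQ_comp_eq hb hbnd hMspan hNperpdef hbN hprim hψ hρ
  let g := ((N ⊔ Nperp).comap M.subtype).liftQ _ hker.ge
  have hg : Function.Injective g :=
    LinearMap.ker_eq_bot.mp (Submodule.ker_liftQ_eq_bot _ _ hker.ge hker.le)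
  refine ⟨⟨g, hg, fun m ↦ rfl⟩, ?_⟩
  have : Module.Finite ℤ Nperp := Module.Finite.iff_fg.mpr
    (hMfg.of_le fun x hx ↦ ((hNperpdef x).1 hx).1)
  have : IsAddTorsionFree V := IsAddTorsionFree.of_module_rat V
  have : Finite ((Nperp →ₗ[ℤ] ℤ) ⧸ LinearMap.range ψ) :=
    finite_dual_quotient_range_of_injective <| injective_of_restrict_span_rat_nondegenerate hb
      (restrict_span_rat_nondegenerate hb hbnd hMspan hNperpdef hbN) hψ
  exact Nat.card_le_card_of_injective g hg

/-- Let `M` be a `ℤ`-lattice in `V` and `N ⊆ M` a primitive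
`ℤ`-submodule such that the restriction of `b` to the `ℚ`-span of `N` is nondegenerate.
Then `m ↦ (y ↦ b(m,y))` induces an injective homomorphism
`M/(N + N^⊥) → (N^⊥)^∨/N^⊥`; consequently `[M : N + N^⊥] ≤ [(N^⊥)^∨ : N^⊥]`. -/
theorem stmt4
    {V : Type*} [AddCommGroup V] [Module ℚ V] [FiniteDimensional ℚ V]
    (b : LinearMap.BilinForm ℚ V)
    (hsymm : ∀ x y : V, b x y = b y x)
    (hnd : ∀ v : V, (∀ w : V, b v w = 0) → v = 0)
    -- M is a ℤ-lattice in V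
    (M : Submodule ℤ V) (hMfg : M.FG)
    (hMspan : Submodule.span ℚ (M : Set V) = ⊤)
    (hMint : ∀ x ∈ M, ∀ y ∈ M, ∃ k : ℤ, b x y = (k : ℚ))
    -- N ⊆ M primitive, with nondegenerate restriction of b to its ℚ-span
    (N : Submodule ℤ V) (hNM : N ≤ M)
    (hprim : ∀ m ∈ M, ∀ k : ℤ, k ≠ 0 → k • m ∈ N → m ∈ N)
    (hNnd : ∀ v ∈ Submodule.span ℚ (N : Set V),
      (∀ w ∈ Submodule.span ℚ (N : Set V), b v w = 0) → v = 0)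
    -- N^⊥, the orthogonal complement of N inside M
    (Nperp : Submodule ℤ V)
    (hNperpdef : ∀ x : V, x ∈ Nperp ↔ x ∈ M ∧ ∀ n ∈ N, b x n = 0)
    -- the natural map N^⊥ → (N^⊥)^∨ = Hom_ℤ(N^⊥, ℤ)
    (ψ : Nperp →ₗ[ℤ] (Nperp →ₗ[ℤ] ℤ))
    (hψ : ∀ n x : Nperp, ((ψ n x : ℤ) : ℚ) = b (x : V) (n : V))
    -- the map M → Hom_ℤ(N^⊥, ℤ), m ↦ (y ↦ b(m,y))
    (ρ : M →ₗ[ℤ] (Nperp →ₗ[ℤ] ℤ))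
    (hρ : ∀ (m : M) (y : Nperp), ((ρ m y : ℤ) : ℚ) = b (m : V) (y : V)) :
    (∃ g : (M ⧸ ((N ⊔ Nperp).comap M.subtype)) →ₗ[ℤ]
        ((Nperp →ₗ[ℤ] ℤ) ⧸ LinearMap.range ψ),
      Function.Injective g ∧
        ∀ m : M, g (Submodule.Quotient.mk m) = Submodule.Quotient.mk (ρ m)) ∧
    Nat.card (M ⧸ ((N ⊔ Nperp).comap M.subtype)) ≤
      Nat.card ((Nperp →ₗ[ℤ] ℤ) ⧸ LinearMap.range ψ) :=
  stmt4_general b hsymm hnd M hMfg hMspan N hprim hNnd Nperp hNperpdef ψ hψ ρ hρ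
end

section
/- Let A be a commutative ring, π ∈ A, and f : A → A a ring homomorphism such that f(π) = π, f(x) − x ∈ πA for all x ∈ A, and f^N = id_A for some positive integer N whose image N·1 in A is a unit. Then for every integer n ≥ 1 and every x ∈ A one has f(x) − x ∈ π^n A. -/
/-- Let `A` be a commutative ring, `π ∈ A`, and `f : A → A` a ring
homomorphism with `f π = π`, `f x - x ∈ π A` for all `x`, and `f^N = id` for some
positive integer `N` whose image in `A` is a unit.  Then `f x - x ∈ π^n A` for every
`n ≥ 1` and every `x`. -/
theorem stmt7
    {A : Type*} [CommRing A] (π : A)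
    (f : A →+* A) (hfπ : f π = π)
    (hf : ∀ x : A, ∃ c : A, f x - x = π * c)
    (N : ℕ) (hN : 0 < N) (hNid : (⇑f)^[N] = id)
    (hNunit : IsUnit (N : A)) :
    ∀ n : ℕ, 1 ≤ n → ∀ x : A, ∃ c : A, f x - x = π ^ n * c := by
  -- iterates are congruent mod π
  have hiter : ∀ (k : ℕ) (y : A), ∃ e : A, (⇑f)^[k] y - y = π * e := by
    intro k
    induction k with
    | zero => intro y; exact ⟨0, by simp⟩
    | succ k ih =>
      intro y
      obtain ⟨e, he⟩ := ih y
      obtain ⟨e', he'⟩ := hf ((⇑f)^[k] y)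
      refine ⟨e' + e, ?_⟩
      rw [Function.iterate_succ_apply']
      linear_combination he + he'
  have hπfix : ∀ k : ℕ, (⇑f)^[k] π = π := fun k => Function.iterate_fixed hfπ k
  obtain ⟨u, hu⟩ := hNunit
  have hinv : (↑u⁻¹ : A) * (N : A) = 1 := by rw [← hu]; exact u.inv_mul
  have main : ∀ n : ℕ, ∀ x : A, ∃ c, f x - x = π ^ n * c := by
    intro n
    induction n with
    | zero => intro x; exact ⟨f x - x, by simp⟩
    | succ n ih =>
      intro x
      obtain ⟨c, hc⟩ := ih x
      -- telescoping sum
      have tele : ∑ k ∈ Finset.range N, ((⇑f)^[k + 1] x - (⇑f)^[k] x) = 0 := by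
        rw [Finset.sum_range_sub (fun k => (⇑f)^[k] x)]
        simp [hNid]
      have term : ∀ k : ℕ, (⇑f)^[k + 1] x - (⇑f)^[k] x = π ^ n * (⇑f)^[k] c := by
        intro k
        have h1 : (⇑f)^[k + 1] x = (⇑f)^[k] (f x) := Function.iterate_succ_apply f k x
        have h2 : (⇑f)^[k] = ⇑(f ^ k) := (RingHom.coe_pow f k).symm
        rw [h1, h2]
        rw [← map_sub (f ^ k), hc, map_mul, map_pow]
        have h3 : (f ^ k) π = π := by have := hπfix k; rwa [h2] at this
        rw [h3]
      have key : π ^ n * ∑ k ∈ Finset.range N, (⇑f)^[k] c = 0 := by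
        rw [Finset.mul_sum, ← tele]
        exact Finset.sum_congr rfl fun k _ => (term k).symm
      -- the sum is N•c mod π
      have hsum : ∃ d : A, ∑ k ∈ Finset.range N, (⇑f)^[k] c = (N : A) * c + π * d := by
        refine ⟨∑ k ∈ Finset.range N, Classical.choose (hiter k c), ?_⟩
        rw [Finset.mul_sum]
        rw [show (N : A) * c = ∑ _k ∈ Finset.range N, c by
          rw [Finset.sum_const]; simp [mul_comm]]
        rw [← Finset.sum_add_distrib]
        refine Finset.sum_congr rfl fun k _ => ?_
        have := Classical.choose_spec (hiter k c)
        linear_combination this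
      obtain ⟨d, hd⟩ := hsum
      have E : π ^ n * ((N : A) * c + π * d) = 0 := by rw [← hd]; exact key
      refine ⟨(↑u⁻¹ : A) * (-d), ?_⟩
      linear_combination hc + (↑u⁻¹ : A) * E - π ^ n * c * hinv
  intro n _ x
  exact main n x
end

section
/- Let A be a commutative ring and π ∈ A with ⋂_{n≥1} π^n A = {0}. Let f : A → A be a ring homomorphism such that f(π) = π, f(x) − x ∈ πA for all x ∈ A, and f^N = id_A for some positive integer N whose image N·1 in A is a unit. Then f = id_A. -/
/-- Let `A` be a commutative ring and `π ∈ A` with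
`⋂_{n ≥ 1} π^n A = {0}`.  Let `f : A → A` be a ring homomorphism with `f π = π`,
`f x - x ∈ π A` for all `x`, and `f^N = id` for some positive integer `N` whose image
in `A` is a unit.  Then `f = id`. -/
theorem stmt8
    {A : Type*} [CommRing A] (π : A)
    (hπ : ∀ x : A, (∀ n : ℕ, 1 ≤ n → ∃ c : A, x = π ^ n * c) → x = 0)
    (f : A →+* A) (hfπ : f π = π)
    (hf : ∀ x : A, ∃ c : A, f x - x = π * c)
    (N : ℕ) (hN : 0 < N) (hNid : (⇑f)^[N] = id)
    (hNunit : IsUnit (N : A)) :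
    f = RingHom.id A := by
  -- iterates fix π
  have hiterπ : ∀ k : ℕ, (⇑f)^[k] π = π := by
    intro k
    induction k with
    | zero => rfl
    | succ k ih => rw [Function.iterate_succ_apply', ih, hfπ]
  -- iterates are additive/multiplicative
  have hsub : ∀ (k : ℕ) (a b : A), (⇑f)^[k] (a - b) = (⇑f)^[k] a - (⇑f)^[k] b := by
    intro k
    induction k with
    | zero => intro a b; rfl
    | succ k ih => intro a b; simp [Function.iterate_succ_apply, map_sub, ih]
  have hmul : ∀ (k : ℕ) (a b : A), (⇑f)^[k] (a * b) = (⇑f)^[k] a * (⇑f)^[k] b := by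
    intro k
    induction k with
    | zero => intro a b; rfl
    | succ k ih => intro a b; simp [Function.iterate_succ_apply, map_mul, ih]
  have hpow : ∀ (k m : ℕ), (⇑f)^[k] (π ^ m) = π ^ m := by
    intro k m
    induction m with
    | zero => simpa using hiterπ k ▸ (by simp [map_one]; induction k with
        | zero => rfl
        | succ k ih => simp [Function.iterate_succ_apply, map_one, ih])
    | succ m ih => rw [pow_succ, hmul, ih, hiterπ]
  -- iterates are congruent to identity mod π
  have hiter_sub : ∀ (k : ℕ) (x : A), ∃ d : A, (⇑f)^[k] x - x = π * d := by
    intro k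
    induction k with
    | zero => intro x; exact ⟨0, by simp⟩
    | succ k ih =>
      intro x
      obtain ⟨d, hd⟩ := ih (f x)
      obtain ⟨c, hc⟩ := hf x
      refine ⟨d + c, ?_⟩
      rw [Function.iterate_succ_apply]
      have h : (⇑f)^[k] (f x) - x = ((⇑f)^[k] (f x) - f x) + (f x - x) := by ring
      rw [h, hd, hc]; ring
  -- main induction: f x - x ∈ π^n A for all n ≥ 1
  have key : ∀ n : ℕ, 1 ≤ n → ∀ x : A, ∃ c : A, f x - x = π ^ n * c := by
    intro n hn
    induction n with
    | zero => omega
    | succ n ih =>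
      intro x
      rcases Nat.eq_zero_or_pos n with h0 | hpos
      · subst h0
        obtain ⟨c, hc⟩ := hf x
        exact ⟨c, by simpa using hc⟩
      · obtain ⟨c, hc⟩ := ih hpos x
        -- claim: f^[k] x - x = π^n (k c + π e_k)
        have claim : ∀ k : ℕ, ∃ e : A, (⇑f)^[k] x - x = π ^ n * ((k : A) * c + π * e) := by
          intro k
          induction k with
          | zero => exact ⟨0, by simp⟩
          | succ k ihk =>
            obtain ⟨e, he⟩ := ihk
            obtain ⟨d, hd⟩ := hiter_sub k c
            refine ⟨d + e, ?_⟩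
            have h1 : (⇑f)^[k + 1] x - x
                = (⇑f)^[k] (f x - x) + ((⇑f)^[k] x - x) := by
              rw [hsub, Function.iterate_succ_apply]; ring
            rw [h1, hc, hmul, hpow, he]
            have hdc : (⇑f)^[k] c = c + π * d := by linear_combination hd
            rw [hdc]
            push_cast
            ring
        obtain ⟨e, he⟩ := claim N
        rw [hNid] at he
        simp only [id_eq, sub_self] at he
        -- 0 = π^n (N c + π e)
        obtain ⟨u, hu⟩ := hNunit
        refine ⟨-(↑u⁻¹ * e), ?_⟩
        have h2 : π ^ n * ((N : A) * c) = -(π ^ (n + 1) * e) := by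
          rw [pow_succ]
          linear_combination -he
        calc f x - x = π ^ n * c := hc
          _ = ↑u⁻¹ * (π ^ n * ((N : A) * c)) := by
              have hinv : (↑u⁻¹ : A) * (N : A) = 1 := by rw [← hu]; exact u.inv_mul
              linear_combination (-(π ^ n * c)) * hinv
          _ = π ^ (n + 1) * -(↑u⁻¹ * e) := by rw [h2]; ring
  -- conclude
  ext x
  have h0 : f x - x = 0 := hπ _ (fun n hn => key n hn x)
  simpa [sub_eq_zero] using h0
end

section
/- Let A be a commutative local ring whose residue field has characteristic 0, and let π be an element of the maximal ideal of A with ⋂_{n≥1} π^n A = {0}. Let f be a ring automorphism of A of finite order such that f(π) = π and f(x) − x ∈ πA for every x ∈ A. Then f = id_A. (Equivalently: a finite group of ring automorphisms of A fixing π maps injectively to the automorphisms of A/πA.) -/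
/-- Let `A` be a commutative local ring whose residue field has
characteristic `0`, and `π` an element of the maximal ideal with `⋂_{n≥1} π^n A = {0}`.
Let `f` be a ring automorphism of `A` of finite order with `f π = π` and
`f x - x ∈ π A` for every `x`.  Then `f = id`. -/
theorem stmt9
    {A : Type*} [CommRing A] [IsLocalRing A]
    [CharZero (IsLocalRing.ResidueField A)]
    (π : A) (hπmem : π ∈ IsLocalRing.maximalIdeal A)
    (hπ : ∀ x : A, (∀ n : ℕ, 1 ≤ n → ∃ c : A, x = π ^ n * c) → x = 0)
    (f : A ≃+* A)
    (hfin : ∃ N : ℕ, 0 < N ∧ (⇑f)^[N] = id)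
    (hfπ : f π = π)
    (hf : ∀ x : A, ∃ c : A, f x - x = π * c) :
    f = RingEquiv.refl A := by
  obtain ⟨N, hNpos, hNid⟩ := hfin
  -- `N` is a unit of `A` since the residue field has characteristic zero.
  have hNunit : IsUnit (N : A) := by
    rw [← IsLocalRing.notMem_maximalIdeal]
    intro hmem
    have h0 : (IsLocalRing.residue A) (N : A) = 0 :=
      (IsLocalRing.residue_eq_zero_iff _).mpr hmem
    rw [map_natCast] at h0
    exact absurd (Nat.cast_injective (h0.trans (Nat.cast_zero).symm)) hNpos.ne'
  obtain ⟨u, hu⟩ := hNunit.exists_left_inv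
  have key : ∀ n : ℕ, 1 ≤ n → ∀ x : A, ∃ c : A, f x - x = π ^ n * c := by
    intro n
    induction n with
    | zero => omega
    | succ n ih =>
      intro _ x
      rcases Nat.eq_zero_or_pos n with hn | hn
      · subst hn
        obtain ⟨c, hc⟩ := hf x
        exact ⟨c, by rw [hc, pow_one]⟩
      · obtain ⟨d, hd⟩ := ih hn x
        have hfx : f x = x + π ^ n * d := by linear_combination hd
        obtain ⟨c', hc'⟩ := hf d
        have hfd : f d = d + π * c' := by linear_combination hc'
        have hfpow : f (π ^ n) = π ^ n := by rw [map_pow, hfπ]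
        have iter : ∀ k : ℕ, ∃ e : A,
            (⇑f)^[k] x = x + (k : A) * (π ^ n * d) + π ^ (n + 1) * e := by
          intro k
          induction k with
          | zero => exact ⟨0, by simp⟩
          | succ k ihk =>
            obtain ⟨e, he⟩ := ihk
            refine ⟨(k : A) * c' + f e, ?_⟩
            rw [Function.iterate_succ_apply', he]
            push_cast
            rw [map_add, map_add, map_mul, map_mul, map_mul, hfpow, hfx, hfd,
              map_natCast, map_pow, hfπ]
            ring
        obtain ⟨e, he⟩ := iter N
        rw [hNid, id_eq] at he
        have hkey : (N : A) * (π ^ n * d) = π ^ (n + 1) * (-e) := by linear_combination -he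
        refine ⟨u * (-e), ?_⟩
        calc f x - x = π ^ n * d := hd
          _ = u * ((N : A) * (π ^ n * d)) := by rw [← mul_assoc, hu, one_mul]
          _ = π ^ (n + 1) * (u * (-e)) := by rw [hkey]; ring
  ext x
  have : f x - x = 0 := hπ _ (fun n hn => key n hn x)
  have : f x = x := sub_eq_zero.mp this
  simpa using this
end

section
/- Let A be a commutative local ring whose residue field has characteristic p > 0, and let π be an element of the maximal ideal of A with ⋂_{n≥1} π^n A = {0}. Let f be a ring automorphism of A of finite order such that f(π) = π and f(x) − x ∈ πA for every x ∈ A. Then the order of f is a power of p. (Equivalently: the kernel of the map from a finite group of ring automorphisms of A fixing π to the automorphisms of A/πA is a p-group.) -/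
private lemma iter_sub' {A : Type*} [CommRing A] (g : A ≃+* A) :
    ∀ (j : ℕ) (a b : A), (⇑g)^[j] (a - b) = (⇑g)^[j] a - (⇑g)^[j] b := by
  intro j
  induction j with
  | zero => simp
  | succ j ih => intro a b; simp [Function.iterate_succ_apply, map_sub, ih]

private lemma iter_mul' {A : Type*} [CommRing A] (g : A ≃+* A) :
    ∀ (j : ℕ) (a b : A), (⇑g)^[j] (a * b) = (⇑g)^[j] a * (⇑g)^[j] b := by
  intro j
  induction j with
  | zero => simp
  | succ j ih => intro a b; simp [Function.iterate_succ_apply, map_mul, ih]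

private lemma iter_pi' {A : Type*} [CommRing A] {π : A} (g : A ≃+* A) (hgπ : g π = π) :
    ∀ j : ℕ, (⇑g)^[j] π = π := by
  intro j
  induction j with
  | zero => rfl
  | succ j ih => rw [Function.iterate_succ_apply, hgπ, ih]


private lemma iter_pow' {A : Type*} [CommRing A] {π : A} (g : A ≃+* A) (hgπ : g π = π)
    (j : ℕ) : ∀ n : ℕ, (⇑g)^[j] (π ^ n) = π ^ n := by
  intro n
  induction n with
  | zero =>
      have h1 : ∀ k : ℕ, (⇑g)^[k] (1 : A) = 1 := by
        intro k
        induction k with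
        | zero => rfl
        | succ k ih => rw [Function.iterate_succ_apply, map_one, ih]
      simpa using h1 j
  | succ n ih => rw [pow_succ, iter_mul' g j, ih, iter_pi' g hgπ j]

private lemma coe_pow' {A : Type*} [CommRing A] (f : A ≃+* A) :
    ∀ m : ℕ, ⇑(f ^ m) = (⇑f)^[m] := by
  intro m
  induction m with
  | zero => rfl
  | succ k ih =>
      funext x
      rw [pow_succ, Function.iterate_succ_apply, ← ih]
      rfl

private lemma iter_mod' {A : Type*} [CommRing A] {π : A} (g : A ≃+* A) (hgπ : g π = π)
    (hg : ∀ x : A, ∃ c : A, g x - x = π * c) :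
    ∀ (j : ℕ) (x : A), ∃ c : A, (⇑g)^[j] x - x = π * c := by
  intro j
  induction j with
  | zero => intro x; exact ⟨0, by simp⟩
  | succ j ih =>
      intro x
      obtain ⟨c, hc⟩ := ih (g x)
      obtain ⟨d, hd⟩ := hg x
      exact ⟨c + d, by rw [Function.iterate_succ_apply]; linear_combination hc + hd⟩

private lemma key' {A : Type*} [CommRing A] {π : A} (g : A ≃+* A) (hgπ : g π = π)
    (hg : ∀ x : A, ∃ c : A, g x - x = π * c) (q : ℕ) (hq : (⇑g)^[q] = id)
    (hu : IsUnit (q : A)) :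
    ∀ n : ℕ, 1 ≤ n → ∀ x : A, ∃ c : A, g x - x = π ^ n * c := by
  intro n
  induction n with
  | zero => omega
  | succ n ih =>
    intro _ x
    rcases Nat.eq_or_lt_of_le (Nat.one_le_iff_ne_zero.mpr (Nat.succ_ne_zero n)) with h1 | h1
    · obtain ⟨c, hc⟩ := hg x
      have hn0 : n = 0 := by omega
      subst hn0
      exact ⟨c, by simpa using hc⟩
    · have hn : 1 ≤ n := by omega
      obtain ⟨c, hc⟩ := ih hn x
      -- inner induction on j
      have inner : ∀ j : ℕ, ∃ d : A,
          (⇑g)^[j] x - x = (j : A) * (π ^ n * c) + π ^ (n + 1) * d := by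
        intro j
        induction j with
        | zero => exact ⟨0, by simp⟩
        | succ j ihj =>
          obtain ⟨d, hd⟩ := ihj
          obtain ⟨e, he⟩ := iter_mod' g hgπ hg j c
          have h2 : (⇑g)^[j + 1] x - (⇑g)^[j] x = π ^ n * (⇑g)^[j] c := by
            rw [Function.iterate_succ_apply, ← iter_sub' g j (g x) x,
              show g x - x = π ^ n * c from hc, iter_mul' g j, iter_pow' g hgπ j n]
          refine ⟨d + e, ?_⟩
          push_cast
          linear_combination h2 + hd + π ^ n * he
      obtain ⟨d, hd⟩ := inner q
      rw [hq] at hd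
      simp only [id_eq, sub_self] at hd
      obtain ⟨u, hu'⟩ := hu
      have huq : (↑u⁻¹ : A) * (q : A) = 1 := by rw [← hu']; exact u.inv_mul
      refine ⟨-(↑u⁻¹ * d), ?_⟩
      rw [hc]
      have : (q : A) * (π ^ n * c) = -(π ^ (n + 1) * d) := by linear_combination -hd
      calc π ^ n * c = ((↑u⁻¹ : A) * (q : A)) * (π ^ n * c) := by rw [huq, one_mul]
        _ = (↑u⁻¹ : A) * ((q : A) * (π ^ n * c)) := by ring
        _ = (↑u⁻¹ : A) * (-(π ^ (n + 1) * d)) := by rw [this]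
        _ = π ^ (n + 1) * -(↑u⁻¹ * d) := by ring

/-- Let `A` be a commutative local ring whose residue field has
characteristic `p > 0`, and `π` an element of the maximal ideal with
`⋂_{n≥1} π^n A = {0}`.  Let `f` be a ring automorphism of `A` of finite order with
`f π = π` and `f x - x ∈ π A` for every `x`.  Then the order of `f` (the least positive
`N` with `f^N = id`) is a power of `p`. -/
theorem stmt10
    {A : Type*} [CommRing A] [IsLocalRing A]
    (p : ℕ) (hp : p.Prime) [CharP (IsLocalRing.ResidueField A) p]
    (π : A) (hπmem : π ∈ IsLocalRing.maximalIdeal A)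
    (hπ : ∀ x : A, (∀ n : ℕ, 1 ≤ n → ∃ c : A, x = π ^ n * c) → x = 0)
    (f : A ≃+* A)
    (hfin : ∃ N : ℕ, 0 < N ∧ (⇑f)^[N] = id)
    (hfπ : f π = π)
    (hf : ∀ x : A, ∃ c : A, f x - x = π * c) :
    ∃ k : ℕ, sInf {N : ℕ | 0 < N ∧ (⇑f)^[N] = id} = p ^ k := by
  set S := {N : ℕ | 0 < N ∧ (⇑f)^[N] = id} with hS
  have hne : S.Nonempty := hfin
  have hmem : sInf S ∈ S := Nat.sInf_mem hne
  set N := sInf S with hN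
  obtain ⟨hNpos, hNid⟩ := hmem
  have hdvd : ∀ q : ℕ, q.Prime → q ∣ N → q = p := by
    intro q hq hqN
    by_contra hqp
    -- q is a unit in A
    have hqu : IsUnit (q : A) := by
      rw [← IsLocalRing.notMem_maximalIdeal]
      intro hqm
      have : (IsLocalRing.residue A) (q : A) = 0 :=
        (IsLocalRing.residue_eq_zero_iff _).mpr hqm
      rw [map_natCast] at this
      have := (CharP.cast_eq_zero_iff (IsLocalRing.ResidueField A) p q).mp this
      exact hqp ((Nat.prime_dvd_prime_iff_eq hp hq).mp this).symm
    set m := N / q with hm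
    have hmq : m * q = N := Nat.div_mul_cancel hqN
    have hmpos : 0 < m := by
      rcases Nat.eq_zero_or_pos m with h | h
      · rw [h, zero_mul] at hmq; omega
      · exact h
    set g : A ≃+* A := f ^ m with hg
    have hgc : ⇑g = (⇑f)^[m] := coe_pow' f m
    have hgπ : g π = π := by rw [hgc]; exact iter_pi' f hfπ m
    have hgmod : ∀ x : A, ∃ c : A, g x - x = π * c := by
      intro x; rw [hgc]; exact iter_mod' f hfπ hf m x
    have hgq : (⇑g)^[q] = id := by
      rw [hgc, ← Function.iterate_mul, hmq]; exact hNid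
    have hid : ∀ x : A, g x = x := by
      intro x
      have := hπ (g x - x) (fun n hn => by
        obtain ⟨c, hc⟩ := key' g hgπ hgmod q hgq hqu n hn x
        exact ⟨c, hc⟩)
      exact sub_eq_zero.mp this
    have hmS : m ∈ S := ⟨hmpos, by rw [← hgc]; funext x; simp [hid x]⟩
    have : N ≤ m := Nat.sInf_le hmS
    have : m < N := by
      rw [← hmq]
      have : 2 ≤ q := hq.two_le
      nlinarith
    omega
  refine ⟨N.primeFactorsList.length, ?_⟩
  exact Nat.eq_prime_pow_of_unique_prime_dvd (by omega) (fun {d} hd hdN => hdvd d hd hdN)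
end
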